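/- arXiv:0912.0052 — 2 statements merged into one kernel-verified Lean document; each statement's English description precedes it below -/
import Mathlib

section
/- A practical number n is a Zumkeller number if and only if σ(n) is even. -/
/-- A positive integer `n` is a Zumkeller number if the set of its positive divisors
can be partitioned into two disjoint parts whose sums are equal. -/
def Zumkeller (n : ℕ) : Prop :=
  0 < n ∧ ∃ A ⊆ n.divisors, ∑ d ∈ A, d = ∑ d ∈ n.divisors \ A, d

/-- A positive integer `n` is a half-Zumkeller number if the set of its positive proper
divisors can be partitioned into two disjoint parts whose sums are equal. -/
def HalfZumkeller (n : ℕ) : Prop :=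
  0 < n ∧ ∃ A ⊆ n.properDivisors, ∑ d ∈ A, d = ∑ d ∈ n.properDivisors \ A, d

/-- A positive integer `n` is a practical number if every positive integer less than `n`
can be written as a sum of distinct positive divisors of `n`. -/
def Practical (n : ℕ) : Prop :=
  0 < n ∧ ∀ m : ℕ, 0 < m → m < n → ∃ S ⊆ n.divisors, m = ∑ d ∈ S, d

/-- A positive integer `n` is a quasi-practical number if every positive integer
`m ≤ σ(n) - n` can be written as a sum of distinct positive divisors of `n`
excluding `n` itself. -/
def QuasiPractical (n : ℕ) : Prop :=
  0 < n ∧ ∀ m : ℕ, 0 < m → m ≤ (∑ d ∈ n.divisors, d) - n →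
    ∃ S ⊆ n.properDivisors, m = ∑ d ∈ S, d

/-!
A practical number `n` has the property that each divisor `d` is at most one more than the
sum of the smaller divisors (write `d - 1 < n` as a sum of distinct divisors, necessarily
smaller than `d`). A set of naturals with this property represents every integer up to its
total sum as a subset sum: take the largest element greedily. Hence `σ(n) / 2` is a sum of
distinct divisors when `σ(n)` is even, and these divisors together with their complement
form the required partition.
-/

open Finset

theorem Finset.exists_subset_sum_eq_of_le_one_add_sum_lt (D : Finset ℕ)
    (hD : ∀ d ∈ D, d ≤ 1 + ∑ e ∈ D with e < d, e) :
    ∀ m ≤ ∑ d ∈ D, d, ∃ S ⊆ D, m = ∑ d ∈ S, d := by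
  induction D using induction_on_max with
  | empty => intro m hm; exact ⟨∅, empty_subset _, by simpa using hm⟩
  | insert a s hlt ih =>
    have has : a ∉ s := fun h => (hlt a h).false
    have hs : ∀ d ∈ s, d ≤ 1 + ∑ e ∈ s with e < d, e := by
      intro d hd
      have hda : ¬ a < d := not_lt.2 (hlt d hd).le
      simpa [filter_insert, hda] using hD d (mem_insert_of_mem hd)
    have ha : a ≤ 1 + ∑ e ∈ s, e := by
      simpa [filter_insert, filter_true_of_mem hlt] using hD a (mem_insert_self a s)
    intro m hm
    rw [sum_insert has] at hm
    by_cases ham : a ≤ m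
    · obtain ⟨S, hS, hSm⟩ := ih hs (m - a) (by omega)
      refine ⟨insert a S, insert_subset_insert a hS, ?_⟩
      rw [sum_insert (fun h => has (hS h))]
      omega
    · obtain ⟨S, hS, hSm⟩ := ih hs m (by omega)
      exact ⟨S, hS.trans (subset_insert a s), hSm⟩

theorem Practical.le_one_add_sum_divisors_lt {n : ℕ} (hn : Practical n) :
    ∀ d ∈ n.divisors, d ≤ 1 + ∑ e ∈ n.divisors with e < d, e := by
  intro d hd
  have hd0 : 0 < d := Nat.pos_of_mem_divisors hd
  have hdn : d ≤ n := Nat.divisor_le hd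
  rcases Nat.eq_or_lt_of_le hd0 with rfl | hd1
  · omega
  obtain ⟨S, hS, hSd⟩ := hn.2 (d - 1) (by omega) (by omega)
  have hSlt : S ⊆ n.divisors.filter (· < d) := fun s hs =>
    mem_filter.2 ⟨hS hs, by have := single_le_sum (fun i _ => Nat.zero_le i) hs; omega⟩
  have : ∑ s ∈ S, s ≤ ∑ e ∈ n.divisors with e < d, e := sum_le_sum_of_subset hSlt
  omega

theorem Practical.exists_subset_divisors_sum_eq {n : ℕ} (hn : Practical n) :
    ∀ m ≤ ∑ d ∈ n.divisors, d, ∃ S ⊆ n.divisors, m = ∑ d ∈ S, d :=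
  n.divisors.exists_subset_sum_eq_of_le_one_add_sum_lt hn.le_one_add_sum_divisors_lt

theorem Zumkeller.even_sum_divisors {n : ℕ} (hn : Zumkeller n) :
    Even (∑ d ∈ n.divisors, d) := by
  obtain ⟨-, A, hA, hsum⟩ := hn
  rw [← sum_sdiff hA, ← hsum]
  exact ⟨_, rfl⟩

theorem stmt2 (n : ℕ) (hn : Practical n) :
    Zumkeller n ↔ Even (∑ d ∈ n.divisors, d) := by
  refine ⟨Zumkeller.even_sum_divisors, fun ⟨k, hk⟩ => ?_⟩
  obtain ⟨A, hA, hAk⟩ := hn.exists_subset_divisors_sum_eq k (by omega)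
  refine ⟨hn.1, A, hA, ?_⟩
  have : ∑ d ∈ n.divisors \ A, d + ∑ d ∈ A, d = ∑ d ∈ n.divisors, d := sum_sdiff hA
  omega
end

section
/- If n is a Zumkeller number and p is a prime with gcd(n, p) = 1, then n·p^l is a Zumkeller number for every positive integer l. -/
/-!
If `A` is one half of a Zumkeller partition of the divisors of `m` and `n` is coprime to `m`,
then each divisor of `m * n` is `a * e` with `a ∣ m`, `e ∣ n` in exactly one way, so
`A * divisors n` has sum `(∑ A) * σ n`, half of `σ (m * n) = σ m * σ n`.
Take `n = p ^ l`.
-/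

open Finset
open scoped Pointwise

theorem zumkeller_iff_two_mul_sum {n : ℕ} :
    Zumkeller n ↔ 0 < n ∧ ∃ A ⊆ n.divisors, 2 * ∑ d ∈ A, d = ∑ d ∈ n.divisors, d := by
  refine and_congr_right fun _ ↦ exists_congr fun A ↦ and_congr_right fun hA ↦ ?_
  have := sum_sdiff (f := id) hA
  simp only [id] at this
  omega

theorem Nat.Coprime.sum_mul_divisors {m n : ℕ} (hmn : m.Coprime n) {A : Finset ℕ}
    (hA : A ⊆ m.divisors) :
    ∑ d ∈ A * n.divisors, d = (∑ d ∈ A, d) * ∑ d ∈ n.divisors, d := by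
  have hinj : Set.InjOn (fun x : ℕ × ℕ ↦ x.1 * x.2) ↑(A ×ˢ n.divisors) :=
    hmn.mul_injOn_divisors.mono (coe_subset.mpr (product_subset_product_left hA))
  rw [Finset.mul_def, sum_image hinj, sum_product, sum_mul_sum]

theorem Zumkeller.mul_of_coprime {m n : ℕ} (hm : Zumkeller m) (hn : 0 < n)
    (hmn : m.Coprime n) : Zumkeller (m * n) := by
  obtain ⟨hm_pos, A, hA, hsum⟩ := zumkeller_iff_two_mul_sum.mp hm
  refine zumkeller_iff_two_mul_sum.mpr ⟨Nat.mul_pos hm_pos hn, A * n.divisors, ?_, ?_⟩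
  · rw [Nat.divisors_mul]
    exact mul_subset_mul_right hA
  · rw [hmn.sum_mul_divisors hA, hmn.sum_divisors_mul, ← hsum, mul_assoc]

theorem stmt11_general (n p l : ℕ) (hz : Zumkeller n) (hp : p.Prime) (hcop : Nat.gcd n p = 1) :
    Zumkeller (n * p ^ l) :=
  hz.mul_of_coprime (pow_pos hp.pos l) (Nat.Coprime.pow_right l hcop)

theorem stmt11 (n p l : ℕ) (hz : Zumkeller n) (hp : p.Prime) (hcop : Nat.gcd n p = 1)
    (hl : 0 < l) : Zumkeller (n * p ^ l) :=
  stmt11_general n p l hz hp hcop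
end
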